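/- arXiv:1205.2008 — 2 statements merged into one kernel-verified Lean document; each statement's English description precedes it below -/
import Mathlib

section
/- Let z ∈ ℂ^ν with Im z ≠ 0 and define g : ℝ^ν → ℝ by g(t) = |t − z|^{−2}. For every multi-index α, ∂^α g(t) = Σ_{2β ≤ α} α! · T_α^β(t,z) · |t − z|^{−2}, where T_α^β(t,z) = ((−2)^{|α−β|} |α−β|!)/(2^{|β|} β! (α−2β)!) · (t − Re z)^{α−2β} · |t − z|^{−2|α−β|}. -/
/-- `|t - z|² = Σ_j ((t_j - Re z_j)² + (Im z_j)²)`. -/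
noncomputable def absSq {ν : ℕ} (z : Fin ν → ℂ) (t : Fin ν → ℝ) : ℝ :=
  ∑ j, ((t j - (z j).re) ^ 2 + (z j).im ^ 2)

/-- Partial derivative in the `i`-th coordinate direction. -/
noncomputable def pderiv' {ν : ℕ} {E : Type*} [NormedAddCommGroup E] [NormedSpace ℝ E]
    (i : Fin ν) (f : (Fin ν → ℝ) → E) : (Fin ν → ℝ) → E :=
  fun t => fderiv ℝ f t (Pi.single i 1)

/-- Multi-index partial derivative `∂^α` (coordinates applied in a fixed order). -/
noncomputable def mderiv {ν : ℕ} {E : Type*} [NormedAddCommGroup E] [NormedSpace ℝ E]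
    (α : Fin ν → ℕ) (f : (Fin ν → ℝ) → E) : (Fin ν → ℝ) → E :=
  (List.finRange ν).foldr (fun i g => (pderiv' i)^[α i] g) f

/-- `T_α^β(t,z) = ((−2)^{|α−β|}|α−β|!)/(2^{|β|} β! (α−2β)!) (t−Re z)^{α−2β} |t−z|^{−2|α−β|}`. -/
noncomputable def Tcoef {ν : ℕ} (z : Fin ν → ℂ) (α β : Fin ν → ℕ) (t : Fin ν → ℝ) : ℝ :=
  ((-2 : ℝ) ^ (∑ j, (α j - β j)) * (Nat.factorial (∑ j, (α j - β j))) /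
      ((2 : ℝ) ^ (∑ j, β j) * (∏ j, (Nat.factorial (β j) : ℝ)) *
        ∏ j, (Nat.factorial (α j - 2 * β j) : ℝ))) *
    (∏ j, (t j - (z j).re) ^ (α j - 2 * β j)) *
    (absSq z t) ^ (-(∑ j, (α j - β j) : ℤ))

/-!
Write `x = t - Re z`, so that `|t - z|² = q(t) = |x|² + |Im z|²`. For any `f`, the partial
derivative `∂ᵢ` sends `x^γ f⁽ᵐ⁾(q)` to `γᵢ x^(γ - eᵢ) f⁽ᵐ⁾(q) + 2 x^(γ + eᵢ) f⁽ᵐ⁺¹⁾(q)`. Hence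
`∂^α (f ∘ q) = Σ_{2β ≤ α} c(α, β) x^(α - 2β) f^(|α - β|)(q)`, where
`c(α, β) = ∏ⱼ αⱼ! 2^(αⱼ - 2βⱼ) / (βⱼ! (αⱼ - 2βⱼ)!)`: the two kinds of terms produced by `∂ᵢ`
recombine through a one-variable Pascal-type recursion for these coefficients. For `f = (·)⁻¹`,
`f⁽ᵐ⁾(u) = (-1)ᵐ m! u^(-m-1)`, and the product regroups into `α! T_α^β(t, z) |t - z|⁻²`.
-/

open Finset
open scoped Nat

namespace RadialDerivative

variable {ν : ℕ}

lemma prod_eq_mul_prod_erase_of_eq {ι M : Type*} [Fintype ι] [DecidableEq ι] [CommMonoid M]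
    {f g : ι → M} (i : ι) (h : ∀ j ≠ i, f j = g j) : ∏ j, f j = f i * ∏ j ∈ univ.erase i, g j := by
  rw [← mul_prod_erase univ f (mem_univ i)]
  exact congrArg _ (prod_congr rfl fun j hj => h j (ne_of_mem_erase hj))

/-- `a! 2^(a-2b) / (b! (a-2b)!)` is, up to the sign `(-1)^b`, the coefficient of `x^(a-2b)` in the
physicists' Hermite polynomial `H_a`. It is extended by `0` to `a < 2b`, so that sums against it
over multi-indices may be taken over any superset of the half-box. -/
noncomputable def hermiteCoeff (a b : ℕ) : ℝ :=
  if 2 * b ≤ a then a ! * 2 ^ (a - 2 * b) / (b ! * (a - 2 * b)!) else 0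

lemma hermiteCoeff_of_lt {a b : ℕ} (h : a < 2 * b) : hermiteCoeff a b = 0 :=
  if_neg (by omega)

lemma hermiteCoeff_two_mul_add (b c : ℕ) :
    hermiteCoeff (2 * b + c) b = (2 * b + c)! * 2 ^ c / (b ! * c !) := by
  rw [hermiteCoeff, if_pos (by omega), Nat.add_sub_cancel_left]

lemma hermiteCoeff_succ_zero (a : ℕ) : hermiteCoeff (a + 1) 0 = 2 * hermiteCoeff a 0 := by
  have h := hermiteCoeff_two_mul_add 0
  simp only [mul_zero, zero_add] at h
  rw [h, h, Nat.factorial_succ, pow_succ]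
  push_cast
  field_simp

lemma hermiteCoeff_succ_succ (a b : ℕ) :
    hermiteCoeff (a + 1) (b + 1) =
      2 * hermiteCoeff a (b + 1) + ((a - 2 * b : ℕ) : ℝ) * hermiteCoeff a b := by
  rcases lt_or_ge a (2 * b) with h | h
  · rw [hermiteCoeff_of_lt (by omega), hermiteCoeff_of_lt (by omega), hermiteCoeff_of_lt h]
    simp
  obtain ⟨c, rfl⟩ := Nat.exists_eq_add_of_le h
  rcases c with _ | _ | c
  · rw [hermiteCoeff_of_lt (by omega), hermiteCoeff_of_lt (by omega)]
    simp
  · rw [hermiteCoeff_of_lt (a := 2 * b + (0 + 1)) (by omega),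
      show 2 * b + (0 + 1) + 1 = 2 * (b + 1) + 0 by omega, hermiteCoeff_two_mul_add,
      hermiteCoeff_two_mul_add, show 2 * b + (0 + 1) - 2 * b = 1 by omega,
      show 2 * (b + 1) + 0 = (2 * b + (0 + 1)) + 1 by omega]
    simp only [Nat.factorial_succ]
    push_cast
    field_simp
    ring
  · rw [show 2 * b + (c + 1 + 1) + 1 = 2 * (b + 1) + (c + 1) by omega, hermiteCoeff_two_mul_add,
      show 2 * b + (c + 1 + 1) = 2 * (b + 1) + c by omega, hermiteCoeff_two_mul_add,
      show 2 * (b + 1) + c = 2 * b + (c + 2) by omega, hermiteCoeff_two_mul_add,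
      show 2 * b + (c + 2) - 2 * b = c + 2 by omega,
      show 2 * (b + 1) + (c + 1) = (2 * b + (c + 2)) + 1 by omega]
    simp only [Nat.factorial_succ, pow_succ]
    push_cast
    field_simp
    ring

def halfBox (α : Fin ν → ℕ) : Finset (Fin ν → ℕ) :=
  (Fintype.piFinset fun j => range (α j + 1)).filter fun β => ∀ j, 2 * β j ≤ α j

lemma mem_halfBox {α β : Fin ν → ℕ} : β ∈ halfBox α ↔ ∀ j, 2 * β j ≤ α j := by
  simp only [halfBox, mem_filter, Fintype.mem_piFinset, mem_range, and_iff_right_iff_imp]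
  exact fun h j => by have := h j; omega

lemma halfBox_mono {α α' : Fin ν → ℕ} (h : α ≤ α') : halfBox α ⊆ halfBox α' := fun _ hβ =>
  mem_halfBox.2 fun j => (mem_halfBox.1 hβ j).trans (h j)

noncomputable def radialCoeff (α β : Fin ν → ℕ) : ℝ :=
  ∏ j, hermiteCoeff (α j) (β j)

lemma radialCoeff_eq_zero {α β : Fin ν → ℕ} (h : β ∉ halfBox α) : radialCoeff α β = 0 := by
  obtain ⟨j, hj⟩ : ∃ j, α j < 2 * β j := by simpa [mem_halfBox] using h
  exact prod_eq_zero (mem_univ j) (hermiteCoeff_of_lt hj)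

lemma radialCoeff_add_single (α β : Fin ν → ℕ) (i : Fin ν) :
    radialCoeff (α + Pi.single i 1) β = 2 * radialCoeff α β +
      if 1 ≤ β i then ((α i + 2 - 2 * β i : ℕ) : ℝ) * radialCoeff α (β - Pi.single i 1) else 0 := by
  have hsplit (α' β' : Fin ν → ℕ) (hα : ∀ j ≠ i, α' j = α j) (hβ : ∀ j ≠ i, β' j = β j) :
      radialCoeff α' β' = hermiteCoeff (α' i) (β' i) *
        ∏ j ∈ univ.erase i, hermiteCoeff (α j) (β j) :=
    prod_eq_mul_prod_erase_of_eq i fun j hj => by rw [hα j hj, hβ j hj]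
  rw [hsplit _ β (fun j hj => by simp [hj]) fun _ _ => rfl,
    hsplit α β (fun _ _ => rfl) fun _ _ => rfl,
    hsplit α (β - Pi.single i 1) (fun _ _ => rfl) fun j hj => by simp [hj]]
  simp only [Pi.add_apply, Pi.sub_apply, Pi.single_eq_same]
  rcases β i with _ | b
  · simp [hermiteCoeff_succ_zero, mul_assoc]
  · simp only [hermiteCoeff_succ_succ, le_add_iff_nonneg_left, zero_le, if_true,
      show α i + 2 - 2 * (b + 1) = α i - 2 * b by omega, Nat.add_sub_cancel]
    ring

lemma sum_halfBox_radialCoeff_mul {α α' : Fin ν → ℕ} (h : α ≤ α') (F : (Fin ν → ℕ) → ℝ) :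
    ∑ β ∈ halfBox α', radialCoeff α β * F β = ∑ β ∈ halfBox α, radialCoeff α β * F β :=
  (sum_subset (halfBox_mono h) fun _ _ hβ => by rw [radialCoeff_eq_zero hβ, zero_mul]).symm

lemma sum_halfBox_shift {M : Type*} [AddCommMonoid M] (α : Fin ν → ℕ) (i : Fin ν)
    (F : (Fin ν → ℕ) → M) (hF : ∀ β ∈ halfBox α, α i = 2 * β i → F (β + Pi.single i 1) = 0) :
    ∑ β ∈ halfBox α, F (β + Pi.single i 1) =
      ∑ β ∈ halfBox (α + Pi.single i 1), if 1 ≤ β i then F β else 0 := by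
  rw [← sum_filter, ← sum_filter_of_ne (p := fun β => 2 * β i < α i) fun β hβ hne => by
    have := mem_halfBox.1 hβ i
    by_contra h
    exact hne (hF β hβ (by omega))]
  refine sum_nbij' (· + Pi.single i 1) (· - Pi.single i 1) ?_ ?_ ?_ ?_ fun _ _ => rfl
  · intro β hβ
    simp only [mem_filter, mem_halfBox] at hβ ⊢
    refine ⟨fun j => ?_, by simp⟩
    have := hβ.1 j
    rcases eq_or_ne j i with rfl | hj
    · simp only [Pi.add_apply, Pi.single_eq_same]; omega
    · simpa [hj]
  · intro β hβ
    simp only [mem_filter, mem_halfBox] at hβ ⊢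
    refine ⟨fun j => ?_, ?_⟩
    · have := hβ.1 j
      rcases eq_or_ne j i with rfl | hj
      · simp only [Pi.add_apply, Pi.sub_apply, Pi.single_eq_same] at this ⊢; omega
      · simpa [hj] using this
    · have := hβ.1 i
      simp only [Pi.add_apply, Pi.sub_apply, Pi.single_eq_same] at this ⊢; omega
  · intro β _
    simp
  · intro β hβ
    simp only [mem_filter, mem_halfBox] at hβ
    ext j
    rcases eq_or_ne j i with rfl | hj
    · simp only [Pi.add_apply, Pi.sub_apply, Pi.single_eq_same]; omega
    · simp [hj]

section MultiIndex

variable (α β : Fin ν → ℕ) (i : Fin ν)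

lemma sub_two_mul_add_single (h : ∀ j, 2 * β j ≤ α j) :
    (fun j => α j - 2 * β j) + Pi.single i 1 =
      fun j => (α + Pi.single i 1 : Fin ν → ℕ) j - 2 * β j := by
  ext j
  simp only [Pi.add_apply]
  have := h j
  omega

lemma sub_two_mul_sub_single :
    (fun j => α j - 2 * β j) - Pi.single i 1 =
      fun j => (α + Pi.single i 1 : Fin ν → ℕ) j - 2 * (β + Pi.single i 1 : Fin ν → ℕ) j := by
  ext j
  simp only [Pi.add_apply, Pi.sub_apply]
  omega

lemma sum_add_single_sub (h : β i ≤ α i) :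
    ∑ j, ((α + Pi.single i 1 : Fin ν → ℕ) j - β j) = ∑ j, (α j - β j) + 1 := by
  calc ∑ j, ((α + Pi.single i 1 : Fin ν → ℕ) j - β j)
      = ∑ j, ((α j - β j) + (Pi.single i 1 : Fin ν → ℕ) j) := sum_congr rfl fun j _ => by
        rcases eq_or_ne j i with rfl | hj
        · simp only [Pi.add_apply, Pi.single_eq_same]; omega
        · simp [hj]
    _ = ∑ j, (α j - β j) + 1 := by simp [sum_add_distrib]

lemma sum_add_single_sub_add_single :
    ∑ j, ((α + Pi.single i 1 : Fin ν → ℕ) j - (β + Pi.single i 1 : Fin ν → ℕ) j) =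
      ∑ j, (α j - β j) :=
  sum_congr rfl fun _ _ => Nat.add_sub_add_right _ _ _

end MultiIndex

lemma sum_halfBox_add_single (α : Fin ν → ℕ) (i : Fin ν) (M : (Fin ν → ℕ) → ℝ) (D : ℕ → ℝ) :
    ∑ β ∈ halfBox (α + Pi.single i 1), radialCoeff (α + Pi.single i 1) β *
        (M (fun j => (α + Pi.single i 1 : Fin ν → ℕ) j - 2 * β j) *
          D (∑ j, ((α + Pi.single i 1 : Fin ν → ℕ) j - β j))) =
      ∑ β ∈ halfBox α, radialCoeff α β *
          (((α i - 2 * β i : ℕ) : ℝ) * M ((fun j => α j - 2 * β j) - Pi.single i 1) *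
            D (∑ j, (α j - β j))) +
        ∑ β ∈ halfBox α, radialCoeff α β *
          (2 * M ((fun j => α j - 2 * β j) + Pi.single i 1) * D (∑ j, (α j - β j) + 1)) := by
  simp only [radialCoeff_add_single, add_mul, sum_add_distrib]
  rw [add_comm]
  congr 1
  · -- `β ↦ β + eᵢ` matches the terms coming from `∂ᵢ x^(α - 2β)` with the second part of the
    -- recursion for `radialCoeff (α + eᵢ)`.
    set F : (Fin ν → ℕ) → ℝ := fun β => ((α i + 2 - 2 * β i : ℕ) : ℝ) *
        radialCoeff α (β - Pi.single i 1) *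
        (M (fun j => (α + Pi.single i 1 : Fin ν → ℕ) j - 2 * β j) *
          D (∑ j, ((α + Pi.single i 1 : Fin ν → ℕ) j - β j))) with hF
    have hshift (β : Fin ν → ℕ) : F (β + Pi.single i 1) = radialCoeff α β *
        (((α i - 2 * β i : ℕ) : ℝ) * M ((fun j => α j - 2 * β j) - Pi.single i 1) *
          D (∑ j, (α j - β j))) := by
      simp only [hF, add_tsub_cancel_right]
      rw [← sub_two_mul_sub_single, sum_add_single_sub_add_single]
      simp only [Pi.add_apply, Pi.single_eq_same,
        show α i + 2 - 2 * (β i + 1) = α i - 2 * β i by omega]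
      ring
    rw [sum_congr rfl fun β _ => (hshift β).symm, sum_halfBox_shift α i F fun β _ h => by
      rw [hshift, h, Nat.sub_self, Nat.cast_zero]; ring]
    exact sum_congr rfl fun β _ => by split_ifs <;> simp [hF, mul_assoc]
  · calc _ = ∑ β ∈ halfBox (α + Pi.single i 1), radialCoeff α β *
          (2 * M (fun j => (α + Pi.single i 1 : Fin ν → ℕ) j - 2 * β j) *
            D (∑ j, ((α + Pi.single i 1 : Fin ν → ℕ) j - β j))) :=
          sum_congr rfl fun _ _ => by ring
      _ = _ := by
        rw [sum_halfBox_radialCoeff_mul le_self_add]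
        refine sum_congr rfl fun β hβ => ?_
        have h := mem_halfBox.1 hβ
        rw [sub_two_mul_add_single α β i h, sum_add_single_sub α β i (by have := h i; omega)]

lemma hasFDerivAt_sub_re (z : Fin ν → ℂ) (j : Fin ν) (t : Fin ν → ℝ) :
    HasFDerivAt (fun s : Fin ν → ℝ => s j - (z j).re)
      (ContinuousLinearMap.proj j : (Fin ν → ℝ) →L[ℝ] ℝ) t := by
  simpa using (hasFDerivAt_apply (𝕜 := ℝ) j t).sub_const ((z j).re)

noncomputable def shiftedMonomial (z : Fin ν → ℂ) (γ : Fin ν → ℕ) (t : Fin ν → ℝ) : ℝ :=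
  ∏ j, (t j - (z j).re) ^ γ j

lemma shiftedMonomial_add_single (z : Fin ν → ℂ) (γ : Fin ν → ℕ) (i : Fin ν) (t : Fin ν → ℝ) :
    shiftedMonomial z (γ + Pi.single i 1) t = (t i - (z i).re) * shiftedMonomial z γ t := by
  unfold shiftedMonomial
  rw [prod_eq_mul_prod_erase_of_eq i (g := fun j => (t j - (z j).re) ^ γ j)
      fun j hj => by simp [hj],
    ← mul_prod_erase univ _ (mem_univ i)]
  simp only [Pi.add_apply, Pi.single_eq_same, pow_succ]
  ring

lemma shiftedMonomial_sub_single (z : Fin ν → ℂ) (γ : Fin ν → ℕ) (i : Fin ν) (t : Fin ν → ℝ) :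
    shiftedMonomial z (γ - Pi.single i 1) t =
      (t i - (z i).re) ^ (γ i - 1) * ∏ j ∈ univ.erase i, (t j - (z j).re) ^ γ j := by
  unfold shiftedMonomial
  rw [prod_eq_mul_prod_erase_of_eq i (g := fun j => (t j - (z j).re) ^ γ j)
    fun j hj => by simp [hj]]
  simp

lemma hasFDerivAt_shiftedMonomial (z : Fin ν → ℂ) (γ : Fin ν → ℕ) (t : Fin ν → ℝ) :
    HasFDerivAt (shiftedMonomial z γ)
      (∑ j, ((γ j : ℝ) * shiftedMonomial z (γ - Pi.single j 1) t) •
        (ContinuousLinearMap.proj j : (Fin ν → ℝ) →L[ℝ] ℝ)) t := by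
  refine (HasFDerivAt.finsetProd (u := univ) (g := fun j s => (s j - (z j).re) ^ γ j) fun j _ =>
    (hasDerivAt_pow (γ j) (t j - (z j).re)).comp_hasFDerivAt t
      (hasFDerivAt_sub_re z j t)).congr_fderiv (sum_congr rfl fun j _ => ?_)
  rw [smul_smul, shiftedMonomial_sub_single]
  ring_nf

lemma hasFDerivAt_absSq (z : Fin ν → ℂ) (t : Fin ν → ℝ) :
    HasFDerivAt (absSq z)
      (∑ j, (2 * (t j - (z j).re)) •
        (ContinuousLinearMap.proj j : (Fin ν → ℝ) →L[ℝ] ℝ)) t := by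
  refine (HasFDerivAt.fun_sum (u := univ) fun j _ =>
    ((hasDerivAt_pow 2 (t j - (z j).re)).comp_hasFDerivAt t
      (hasFDerivAt_sub_re z j t)).add_const ((z j).im ^ 2)).congr_fderiv ?_
  simp

lemma sum_smul_proj_apply_single (c : Fin ν → ℝ) (i : Fin ν) :
    (∑ j, c j • (ContinuousLinearMap.proj j : (Fin ν → ℝ) →L[ℝ] ℝ)) (Pi.single i 1)
      = c i := by
  simp [Pi.single_apply]

lemma pderiv'_sum {ι : Type*} (s : Finset ι) (f : ι → (Fin ν → ℝ) → ℝ) (i : Fin ν)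
    {t : Fin ν → ℝ} (h : ∀ k ∈ s, DifferentiableAt ℝ (f k) t) :
    pderiv' i (fun t => ∑ k ∈ s, f k t) t = ∑ k ∈ s, pderiv' i (f k) t := by
  simp [pderiv', fderiv_fun_sum h]

lemma pderiv'_const_mul (c : ℝ) (f : (Fin ν → ℝ) → ℝ) (i : Fin ν) {t : Fin ν → ℝ}
    (h : DifferentiableAt ℝ f t) : pderiv' i (fun t => c * f t) t = c * pderiv' i f t := by
  simp [pderiv', fderiv_const_mul h]

lemma hasFDerivAt_shiftedMonomial_mul_comp_absSq (z : Fin ν → ℂ) (γ : Fin ν → ℕ)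
    {f : ℝ → ℝ} {f' : ℝ} {t : Fin ν → ℝ} (hf : HasDerivAt f f' (absSq z t)) :
    HasFDerivAt (fun s => shiftedMonomial z γ s * f (absSq z s))
      (shiftedMonomial z γ t • (f' • ∑ j, (2 * (t j - (z j).re)) •
          (ContinuousLinearMap.proj j : (Fin ν → ℝ) →L[ℝ] ℝ)) +
        f (absSq z t) • ∑ j, ((γ j : ℝ) * shiftedMonomial z (γ - Pi.single j 1) t) •
          (ContinuousLinearMap.proj j : (Fin ν → ℝ) →L[ℝ] ℝ)) t :=
  (hasFDerivAt_shiftedMonomial z γ t).mul (hf.comp_hasFDerivAt t (hasFDerivAt_absSq z t))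

lemma pderiv'_shiftedMonomial_mul_comp_absSq (z : Fin ν → ℂ) (γ : Fin ν → ℕ) (i : Fin ν)
    {f : ℝ → ℝ} {f' : ℝ} {t : Fin ν → ℝ} (hf : HasDerivAt f f' (absSq z t)) :
    pderiv' i (fun s => shiftedMonomial z γ s * f (absSq z s)) t =
      γ i * shiftedMonomial z (γ - Pi.single i 1) t * f (absSq z t) +
        2 * shiftedMonomial z (γ + Pi.single i 1) t * f' := by
  rw [pderiv', (hasFDerivAt_shiftedMonomial_mul_comp_absSq z γ hf).fderiv]
  simp only [add_apply, smul_apply,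
    sum_smul_proj_apply_single, smul_eq_mul, shiftedMonomial_add_single]
  ring

noncomputable def radialSum (z : Fin ν → ℂ) (f : ℝ → ℝ) (α : Fin ν → ℕ) : (Fin ν → ℝ) → ℝ :=
  fun t => ∑ β ∈ halfBox α, radialCoeff α β *
    (shiftedMonomial z (fun j => α j - 2 * β j) t * deriv^[∑ j, (α j - β j)] f (absSq z t))

lemma pderiv'_radialSum_eq_sum {z : Fin ν → ℂ} {f : ℝ → ℝ}
    (hf : ∀ m t, DifferentiableAt ℝ (deriv^[m] f) (absSq z t)) (α : Fin ν → ℕ) (i : Fin ν)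
    (t : Fin ν → ℝ) :
    pderiv' i (radialSum z f α) t =
      ∑ β ∈ halfBox α, radialCoeff α β *
          (((α i - 2 * β i : ℕ) : ℝ) *
            shiftedMonomial z ((fun j => α j - 2 * β j) - Pi.single i 1) t *
              deriv^[∑ j, (α j - β j)] f (absSq z t)) +
        ∑ β ∈ halfBox α, radialCoeff α β *
          (2 * shiftedMonomial z ((fun j => α j - 2 * β j) + Pi.single i 1) t *
            deriv^[∑ j, (α j - β j) + 1] f (absSq z t)) := by
  have hD (m : ℕ) : HasDerivAt (deriv^[m] f) (deriv^[m + 1] f (absSq z t)) (absSq z t) := by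
    rw [Function.iterate_succ_apply']
    exact (hf m t).hasDerivAt
  have hterm (β : Fin ν → ℕ) :=
    (hasFDerivAt_shiftedMonomial_mul_comp_absSq z (fun j => α j - 2 * β j)
      (hD (∑ j, (α j - β j)))).differentiableAt
  unfold radialSum
  rw [← sum_add_distrib, pderiv'_sum _ _ i fun β _ => (hterm β).const_mul _]
  refine sum_congr rfl fun β _ => ?_
  rw [pderiv'_const_mul _ _ i (hterm β), pderiv'_shiftedMonomial_mul_comp_absSq z _ i (hD _),
    mul_add]

lemma pderiv'_radialSum {z : Fin ν → ℂ} {f : ℝ → ℝ}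
    (hf : ∀ m t, DifferentiableAt ℝ (deriv^[m] f) (absSq z t)) (α : Fin ν → ℕ) (i : Fin ν) :
    pderiv' i (radialSum z f α) = radialSum z f (α + Pi.single i 1) := by
  funext t
  rw [pderiv'_radialSum_eq_sum hf]
  exact (sum_halfBox_add_single α i (shiftedMonomial z · t) (deriv^[·] f (absSq z t))).symm

lemma iterate_pderiv'_radialSum {z : Fin ν → ℂ} {f : ℝ → ℝ}
    (hf : ∀ m t, DifferentiableAt ℝ (deriv^[m] f) (absSq z t)) (α : Fin ν → ℕ) (i : Fin ν)
    (n : ℕ) : (pderiv' i)^[n] (radialSum z f α) = radialSum z f (α + Pi.single i n) := by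
  induction n with
  | zero => simp
  | succ n ih =>
    rw [Function.iterate_succ_apply', ih, pderiv'_radialSum hf, add_assoc, ← Pi.single_add]

lemma foldr_pderiv'_radialSum {z : Fin ν → ℂ} {f : ℝ → ℝ}
    (hf : ∀ m t, DifferentiableAt ℝ (deriv^[m] f) (absSq z t)) (α γ : Fin ν → ℕ)
    (l : List (Fin ν)) :
    l.foldr (fun i g => (pderiv' i)^[α i] g) (radialSum z f γ) =
      radialSum z f (γ + (l.map fun i => Pi.single i (α i)).sum) := by
  induction l with
  | nil => simp
  | cons i l ih =>
    rw [List.foldr_cons, ih, iterate_pderiv'_radialSum hf, List.map_cons, List.sum_cons,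
      add_assoc, add_comm (List.sum _)]

lemma radialSum_zero (z : Fin ν → ℂ) (f : ℝ → ℝ) : radialSum z f 0 = fun t => f (absSq z t) := by
  have h0 : halfBox (0 : Fin ν → ℕ) = {0} := by
    ext β
    simp only [mem_halfBox, Pi.zero_apply, mem_singleton, funext_iff]
    exact forall_congr' fun j => by omega
  funext t
  simp [radialSum, h0, radialCoeff, hermiteCoeff, shiftedMonomial]

lemma mderiv_comp_absSq {z : Fin ν → ℂ} {f : ℝ → ℝ}
    (hf : ∀ m t, DifferentiableAt ℝ (deriv^[m] f) (absSq z t)) (α : Fin ν → ℕ) :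
    mderiv α (fun t => f (absSq z t)) = radialSum z f α := by
  rw [mderiv, ← radialSum_zero, foldr_pderiv'_radialSum hf, zero_add, ← Fin.sum_univ_def,
    univ_sum_single]

lemma absSq_pos {z : Fin ν → ℂ} (hz : (fun j => (z j).im) ≠ 0) (t : Fin ν → ℝ) :
    0 < absSq z t := by
  obtain ⟨j, hj⟩ := Function.ne_iff.mp hz
  have : (z j).im ≠ 0 := hj
  exact sum_pos' (fun _ _ => by positivity) ⟨j, mem_univ j, by positivity⟩

lemma radialCoeff_mul_iter_deriv_inv {α β : Fin ν → ℕ} (hβ : β ∈ halfBox α) (z : Fin ν → ℂ)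
    (t : Fin ν → ℝ) (ht : absSq z t ≠ 0) :
    radialCoeff α β * (shiftedMonomial z (fun j => α j - 2 * β j) t *
        deriv^[∑ j, (α j - β j)] Inv.inv (absSq z t)) =
      (∏ j, ((α j)! : ℝ)) * Tcoef z α β t * (absSq z t)⁻¹ := by
  have h := mem_halfBox.1 hβ
  have hsum : ∑ j, (α j - β j) = ∑ j, (α j - 2 * β j) + ∑ j, β j := by
    rw [← sum_add_distrib]
    exact sum_congr rfl fun j _ => by have := h j; omega
  have hcoeff : radialCoeff α β = (∏ j, ((α j)! : ℝ)) * 2 ^ (∑ j, (α j - 2 * β j)) /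
      ((∏ j, ((β j)! : ℝ)) * ∏ j, ((α j - 2 * β j)! : ℝ)) := by
    simp only [radialCoeff, hermiteCoeff, if_pos (h _), prod_div_distrib, prod_mul_distrib,
      prod_pow_eq_pow_sum]
  have hsumZ : ∑ j, ((α j : ℤ) - β j) = ((∑ j, (α j - β j) : ℕ) : ℤ) := by
    rw [Nat.cast_sum]
    exact sum_congr rfl fun j _ => (Nat.cast_sub (by have := h j; omega)).symm
  rw [hcoeff, iter_deriv_inv, Tcoef, hsumZ, hsum, shiftedMonomial,
    show (-1 - ((∑ j, (α j - 2 * β j) + ∑ j, β j : ℕ) : ℤ)) =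
      -((∑ j, (α j - 2 * β j) + ∑ j, β j : ℕ) : ℤ) - 1 by ring, zpow_sub_one₀ ht, neg_pow,
    pow_add]
  field_simp
  rw [show (-2 : ℝ) = -1 * 2 by norm_num, mul_pow, pow_add]
  ring

end RadialDerivative

open RadialDerivative in
theorem stmt_1_general {ν : ℕ} (z : Fin ν → ℂ)
    (hz : (fun j => (z j).im) ≠ 0) (α : Fin ν → ℕ) (t : Fin ν → ℝ) :
    mderiv α (fun s => (absSq z s)⁻¹) t =
      ∑ β ∈ (Fintype.piFinset fun j => Finset.range (α j + 1)).filter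
          (fun β => ∀ j, 2 * β j ≤ α j),
        ((∏ j, (Nat.factorial (α j) : ℝ)) * Tcoef z α β t * (absSq z t)⁻¹) := by
  have hq (s : Fin ν → ℝ) : absSq z s ≠ 0 := (absSq_pos hz s).ne'
  have hinv (m : ℕ) (s : Fin ν → ℝ) : DifferentiableAt ℝ (deriv^[m] Inv.inv) (absSq z s) := by
    rw [iter_deriv_inv']
    exact ((differentiableAt_zpow).2 (Or.inl (hq s))).const_mul _
  rw [mderiv_comp_absSq hinv]
  exact Finset.sum_congr rfl fun β hβ => radialCoeff_mul_iter_deriv_inv hβ z t (hq t)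

/-- For `g(t) = |t - z|^{-2}` with `Im z ≠ 0`, and every multi-index `α`,
`∂^α g(t) = Σ_{2β ≤ α} α! T_α^β(t,z) |t - z|^{-2}`. -/
theorem stmt_1 {ν : ℕ} (hν : 1 ≤ ν) (z : Fin ν → ℂ)
    (hz : (fun j => (z j).im) ≠ 0) (α : Fin ν → ℕ) (t : Fin ν → ℝ) :
    mderiv α (fun s => (absSq z s)⁻¹) t =
      ∑ β ∈ (Fintype.piFinset fun j => Finset.range (α j + 1)).filter
          (fun β => ∀ j, 2 * β j ≤ α j),
        ((∏ j, (Nat.factorial (α j) : ℝ)) * Tcoef z α β t * (absSq z t)⁻¹) :=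
  stmt_1_general z hz α t
end

section
/- Let H be a Hilbert space, A_1,…,A_ν pairwise commuting bounded self-adjoint operators, B a bounded operator, and h_1, …, h_k bounded operators of the form h_i = h_i(A) such that for each i and each multi-index α_0 with |α_0| + n + 1 ≤ n_0 there is an expansion [ad_A^{α_0}(B), h_i] = Σ_{1≤|α|≤n} (1/α!) (∂^α h_i)(A) ad_A^{α_0+α}(B) + R_n^{h_i}(α_0) with bounded remainders. Then [B, h_1⋯h_k] = Σ_{1≤|α|≤n} (1/α!) ∂^α(Π h_i)(A) ad_A^α(B) + Σ_{j=1}^k Σ_{|α|=0}^n (1/α!) ∂^α(Π_{i<j} h_i)(A) R_{n−|α|}^{h_j}(α) Π_{i>j} h_i(A). -/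
/-- Multi-index iterated commutator `ad_a^α(b)` (coordinates in a fixed order). -/
def adm {R : Type*} [Ring R] {ν : ℕ} (a : Fin ν → R) (b : R) (α : Fin ν → ℕ) : R :=
  (List.finRange ν).foldl (fun x j => (fun y => y * a j - a j * y)^[α j] x) b

/-- Multinomial convolution of two coefficient families (the Leibniz rule for the
normalized derivative coefficients `h^{(α)} = (1/α!)∂^α h(A)`). -/
noncomputable def conv {R : Type*} [Ring R] {ν : ℕ}
    (F G : (Fin ν → ℕ) → R) (α : Fin ν → ℕ) : R :=
  ∑ β ∈ Fintype.piFinset fun j => Finset.range (α j + 1),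
    F β * G (fun j => α j - β j)

/-- Coefficient family of a product of several factors. -/
noncomputable def listConv {R : Type*} [Ring R] {ν : ℕ} :
    List ((Fin ν → ℕ) → R) → (Fin ν → ℕ) → R
  | [] => fun α => if α = 0 then 1 else 0
  | F :: L => conv F (listConv L)

/-!
Write `X α = ad_a^α(b)` and put each expansion in the form
`X α₀ * F 0 = ∑_{|α| ≤ m} F α * X (α₀ + α) + ρ α₀ m`. For a product `F 0 * G 0`, expand
`X α₀ * F 0` first and then push each `X (α₀ + β)` past `G 0` with the expansion of `G` at the
shifted index `α₀ + β` and the lowered order `m - |β|`. The double sum over `(β, γ)` regroups by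
`α = β + γ` into the multinomial convolution of the coefficients (the Leibniz rule), and what is
left over is `ρ α₀ m * G 0 + ∑_β F β * σ (α₀ + β) (m - |β|)`. Induction on the number of
factors, unfolding this recursive remainder, and evaluation at `α₀ = 0`, `m = n` give the claim.
-/

namespace MultiIndex

variable {ν : ℕ}

def deg (α : Fin ν → ℕ) : ℕ := ∑ v, α v

def degLE (ν m : ℕ) : Finset (Fin ν → ℕ) :=
  (Fintype.piFinset fun _ => Finset.range (m + 1)).filter fun α => deg α ≤ m

@[simp] lemma deg_zero : deg (0 : Fin ν → ℕ) = 0 := by simp [deg]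

@[simp] lemma deg_add (α β : Fin ν → ℕ) : deg (α + β) = deg α + deg β :=
  Finset.sum_add_distrib

lemma deg_eq_zero {α : Fin ν → ℕ} : deg α = 0 ↔ α = 0 := by
  simp [deg, Finset.sum_eq_zero_iff, funext_iff]

lemma apply_le_deg (α : Fin ν → ℕ) (v : Fin ν) : α v ≤ deg α :=
  Finset.single_le_sum (fun _ _ => Nat.zero_le _) (Finset.mem_univ v)

@[simp] lemma mem_degLE {α : Fin ν → ℕ} {m : ℕ} : α ∈ degLE ν m ↔ deg α ≤ m := by
  simp only [degLE, Finset.mem_filter, Fintype.mem_piFinset, Finset.mem_range,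
    and_iff_right_iff_imp]
  exact fun h v => Nat.lt_succ_of_le ((apply_le_deg α v).trans h)

lemma zero_mem_degLE (m : ℕ) : (0 : Fin ν → ℕ) ∈ degLE ν m := by
  simp

lemma mem_piFinset_range_succ {α β : Fin ν → ℕ} :
    β ∈ Fintype.piFinset (fun v => Finset.range (α v + 1)) ↔ β ≤ α := by
  simp [Pi.le_def]

lemma filter_one_le_deg_eq_erase (m : ℕ) :
    (Fintype.piFinset fun _ => Finset.range (m + 1)).filter
      (fun α : Fin ν → ℕ => 1 ≤ deg α ∧ deg α ≤ m) = (degLE ν m).erase 0 := by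
  ext α
  simp only [degLE, Finset.mem_filter, Finset.mem_erase, Nat.one_le_iff_ne_zero, ne_eq,
    deg_eq_zero]
  tauto


end MultiIndex

open MultiIndex

section Expansion

variable {R : Type*} [Ring R] {ν : ℕ}

lemma conv_zero (F G : (Fin ν → ℕ) → R) : conv F G 0 = F 0 * G 0 := by
  simp [conv, ← Pi.zero_def]

lemma listConv_zero (L : List ((Fin ν → ℕ) → R)) :
    listConv L 0 = (L.map fun F => F 0).prod := by
  induction L with
  | nil => simp [listConv]
  | cons F L ih => simp [listConv, conv_zero, ih]

lemma adm_zero (a : Fin ν → R) (b : R) : adm a b 0 = b := by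
  simp [adm]

lemma sum_degLE_conv_mul (F G Y : (Fin ν → ℕ) → R) (m : ℕ) :
    ∑ α ∈ degLE ν m, conv F G α * Y α =
      ∑ β ∈ degLE ν m, ∑ γ ∈ degLE ν (m - deg β), F β * G γ * Y (β + γ) := by
  simp only [conv, Finset.sum_mul, Finset.sum_sigma']
  refine Finset.sum_nbij' (fun x => ⟨x.2, x.1 - x.2⟩) (fun x => ⟨x.1 + x.2, x.1⟩)
    ?_ ?_ ?_ ?_ ?_
  · rintro ⟨α, β⟩ hx
    simp only [Finset.mem_sigma, mem_degLE, mem_piFinset_range_succ] at hx ⊢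
    have hdeg := deg_add β (α - β)
    rw [add_tsub_cancel_of_le hx.2] at hdeg
    omega
  · rintro ⟨β, γ⟩ hx
    simp only [Finset.mem_sigma, mem_degLE, mem_piFinset_range_succ, deg_add] at hx ⊢
    exact ⟨by omega, le_self_add⟩
  · rintro ⟨α, β⟩ hx
    simp only [Finset.mem_sigma, mem_piFinset_range_succ] at hx
    simp only [add_tsub_cancel_of_le hx.2]
  · rintro ⟨β, γ⟩ -
    simp only [add_tsub_cancel_left]
  · rintro ⟨α, β⟩ hx
    simp only [Finset.mem_sigma, mem_piFinset_range_succ] at hx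
    simp only [add_tsub_cancel_of_le hx.2]
    rfl

/-- `ρ α₀ m` is the remainder `R_m(α₀)`. Moving the `α = 0` term `F 0 * X α₀` of the sum to the
left gives the commutator form, see `hasCommExpansion_iff`. -/
def HasCommExpansion (X : (Fin ν → ℕ) → R) (n₀ : ℕ) (F : (Fin ν → ℕ) → R)
    (ρ : (Fin ν → ℕ) → ℕ → R) : Prop :=
  ∀ α₀ m, deg α₀ + m < n₀ → X α₀ * F 0 = ∑ α ∈ degLE ν m, F α * X (α₀ + α) + ρ α₀ m

theorem hasCommExpansion_iff {X : (Fin ν → ℕ) → R} {n₀ : ℕ} {F : (Fin ν → ℕ) → R}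
    {ρ : (Fin ν → ℕ) → ℕ → R} :
    HasCommExpansion X n₀ F ρ ↔ ∀ α₀ m, deg α₀ + m < n₀ →
      X α₀ * F 0 - F 0 * X α₀ =
        ∑ α ∈ (Fintype.piFinset fun _ => Finset.range (m + 1)).filter
            (fun α => 1 ≤ deg α ∧ deg α ≤ m), F α * X (α₀ + α) + ρ α₀ m := by
  refine forall₂_congr fun α₀ m => imp_congr_right fun _ => ?_
  rw [sub_eq_iff_eq_add, filter_one_le_deg_eq_erase,
    ← Finset.add_sum_erase _ _ (zero_mem_degLE m),
    add_zero, add_assoc, add_comm]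

theorem HasCommExpansion.conv {X : (Fin ν → ℕ) → R} {n₀ : ℕ} {F G : (Fin ν → ℕ) → R}
    {ρ σ : (Fin ν → ℕ) → ℕ → R} (hF : HasCommExpansion X n₀ F ρ)
    (hG : HasCommExpansion X n₀ G σ) :
    HasCommExpansion X n₀ (conv F G)
      (fun α₀ m => ρ α₀ m * G 0 + ∑ β ∈ degLE ν m, F β * σ (α₀ + β) (m - deg β)) := by
  intro α₀ m hm
  have hstep : ∀ β ∈ degLE ν m, F β * X (α₀ + β) * G 0 =
      ∑ γ ∈ degLE ν (m - deg β), F β * G γ * X (α₀ + (β + γ)) +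
        F β * σ (α₀ + β) (m - deg β) := by
    intro β hβ
    rw [mem_degLE] at hβ
    rw [mul_assoc, hG (α₀ + β) (m - deg β) (by rw [deg_add]; omega), mul_add, Finset.mul_sum]
    simp only [mul_assoc, add_assoc]
  rw [conv_zero, ← mul_assoc, hF α₀ m hm, add_mul, Finset.sum_mul, Finset.sum_congr rfl hstep,
    sum_degLE_conv_mul F G (fun α => X (α₀ + α)), Finset.sum_add_distrib]
  dsimp only
  abel

noncomputable def prodRemainder {k : ℕ} (h : Fin k → (Fin ν → ℕ) → R)
    (r : Fin k → (Fin ν → ℕ) → ℕ → R) (α₀ : Fin ν → ℕ) (m : ℕ) : R :=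
  ∑ j : Fin k, ∑ α ∈ degLE ν m,
    listConv (((List.finRange k).filter (fun i => i < j)).map h) α * r j (α₀ + α) (m - deg α) *
      (((List.finRange k).filter (fun i => j < i)).map (fun i => h i 0)).prod

lemma prodRemainder_succ {k : ℕ} (h : Fin (k + 1) → (Fin ν → ℕ) → R)
    (r : Fin (k + 1) → (Fin ν → ℕ) → ℕ → R) (α₀ : Fin ν → ℕ) (m : ℕ) :
    prodRemainder h r α₀ m =
      r 0 α₀ m * ((List.finRange k).map fun i => h i.succ 0).prod +
        ∑ β ∈ degLE ν m, h 0 β *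
          prodRemainder (fun i => h i.succ) (fun i => r i.succ) (α₀ + β) (m - deg β) := by
  unfold prodRemainder
  rw [Fin.sum_univ_succ]
  congr 1
  · have hgt : (List.finRange (k + 1)).filter (fun i => 0 < i) =
        (List.finRange k).map Fin.succ := by
      simp [List.finRange_succ, List.filter_map, Function.comp_def, Fin.succ_pos]
    simp [hgt, listConv, Function.comp_def]
  · have hlt (j : Fin k) : (List.finRange (k + 1)).filter (fun i => i < j.succ) =
        0 :: ((List.finRange k).filter (fun i => i < j)).map Fin.succ := by
      simp [List.finRange_succ, List.filter_map, Function.comp_def, Fin.succ_pos]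
    have hgt (j : Fin k) : (List.finRange (k + 1)).filter (fun i => j.succ < i) =
        ((List.finRange k).filter (fun i => j < i)).map Fin.succ := by
      simp [List.finRange_succ, List.filter_map, Function.comp_def]
    simp only [hlt, hgt, List.map_cons, List.map_map, Function.comp_def, listConv,
      Finset.mul_sum]
    rw [Finset.sum_comm (s := degLE ν m)]
    refine Finset.sum_congr rfl fun j _ => ?_
    simp only [mul_assoc]
    rw [sum_degLE_conv_mul]
    refine Finset.sum_congr rfl fun β _ => Finset.sum_congr rfl fun γ _ => ?_
    rw [deg_add, Nat.sub_sub, add_assoc, mul_assoc]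

theorem hasCommExpansion_listConv {X : (Fin ν → ℕ) → R} {n₀ : ℕ} :
    ∀ {k : ℕ} {h : Fin k → (Fin ν → ℕ) → R} {r : Fin k → (Fin ν → ℕ) → ℕ → R},
      (∀ i, HasCommExpansion X n₀ (h i) (r i)) →
        HasCommExpansion X n₀ (listConv ((List.finRange k).map h)) (prodRemainder h r)
  | 0, h, r, _ => by
    intro α₀ m _
    simp [listConv, prodRemainder]
  | k + 1, h, r, hexp => by
    have hprod := (hexp 0).conv (hasCommExpansion_listConv fun i => hexp i.succ)
    rw [listConv_zero, List.map_map] at hprod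
    rw [funext₂ (prodRemainder_succ h r), List.finRange_succ, List.map_cons, List.map_map]
    exact hprod

end Expansion

theorem stmt_13_general {R : Type*} [Ring R] {ν k n n₀ : ℕ}
    (a : Fin ν → R) (b : R)
    (h : Fin k → (Fin ν → ℕ) → R) (r : Fin k → (Fin ν → ℕ) → ℕ → R)
    (hexp : ∀ (i : Fin k) (α₀ : Fin ν → ℕ) (m : ℕ), (∑ j, α₀ j) + m + 1 ≤ n₀ →
      adm a b α₀ * h i 0 - h i 0 * adm a b α₀ =
        (∑ α ∈ (Fintype.piFinset fun _ : Fin ν => Finset.range (m + 1)).filter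
            (fun α => 1 ≤ ∑ j, α j ∧ ∑ j, α j ≤ m),
          h i α * adm a b (fun v => α₀ v + α v)) + r i α₀ m)
    (hn : n + 1 ≤ n₀) :
    b * ((List.finRange k).map (fun i => h i 0)).prod -
        ((List.finRange k).map (fun i => h i 0)).prod * b =
      (∑ α ∈ (Fintype.piFinset fun _ : Fin ν => Finset.range (n + 1)).filter
          (fun α => 1 ≤ ∑ j, α j ∧ ∑ j, α j ≤ n),
        listConv ((List.finRange k).map h) α * adm a b α) +
      ∑ j : Fin k,
        ∑ α ∈ (Fintype.piFinset fun _ : Fin ν => Finset.range (n + 1)).filter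
            (fun α => ∑ v, α v ≤ n),
          listConv (((List.finRange k).filter (fun i => i < j)).map h) α *
            r j α (n - ∑ v, α v) *
            (((List.finRange k).filter (fun i => j < i)).map (fun i => h i 0)).prod := by
  have hprod := hasCommExpansion_iff.1
    (hasCommExpansion_listConv fun i => hasCommExpansion_iff.2 (hexp i)) 0 n (by simpa using hn)
  rw [listConv_zero, List.map_map, adm_zero] at hprod
  simp only [zero_add, prodRemainder] at hprod
  exact hprod

/-- Product expansion: if each factor `h_i` admits a commutator expansion of every
order `m` (with `|α₀| + m + 1 ≤ n₀`) with remainders `r_i`, then the product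
`h_1 ⋯ h_k` admits the stated expansion of order `n`. -/
theorem stmt_13 {R : Type*} [Ring R] {ν k n n₀ : ℕ}
    (a : Fin ν → R) (b : R) (hcomm : ∀ i j, a i * a j = a j * a i)
    (h : Fin k → (Fin ν → ℕ) → R) (r : Fin k → (Fin ν → ℕ) → ℕ → R)
    (hexp : ∀ (i : Fin k) (α₀ : Fin ν → ℕ) (m : ℕ), (∑ j, α₀ j) + m + 1 ≤ n₀ →
      adm a b α₀ * h i 0 - h i 0 * adm a b α₀ =
        (∑ α ∈ (Fintype.piFinset fun _ : Fin ν => Finset.range (m + 1)).filter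
            (fun α => 1 ≤ ∑ j, α j ∧ ∑ j, α j ≤ m),
          h i α * adm a b (fun v => α₀ v + α v)) + r i α₀ m)
    (hn : n + 1 ≤ n₀) :
    b * ((List.finRange k).map (fun i => h i 0)).prod -
        ((List.finRange k).map (fun i => h i 0)).prod * b =
      (∑ α ∈ (Fintype.piFinset fun _ : Fin ν => Finset.range (n + 1)).filter
          (fun α => 1 ≤ ∑ j, α j ∧ ∑ j, α j ≤ n),
        listConv ((List.finRange k).map h) α * adm a b α) +
      ∑ j : Fin k,
        ∑ α ∈ (Fintype.piFinset fun _ : Fin ν => Finset.range (n + 1)).filter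
            (fun α => ∑ v, α v ≤ n),
          listConv (((List.finRange k).filter (fun i => i < j)).map h) α *
            r j α (n - ∑ v, α v) *
            (((List.finRange k).filter (fun i => j < i)).map (fun i => h i 0)).prod :=
  stmt_13_general a b h r hexp hn
end
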